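/- arXiv:1903.12445 — 2 statements merged into one kernel-verified Lean document; each statement's English description precedes it below -/
import Mathlib

section
/- Let f : ℕ → ℝ be a multiplicative arithmetic function with f(1) = 1. Assume there exist A > 0 and c ∈ (0,1) such that |f(n)| ≤ A c^n for all n ≥ 2. Then for all n ≥ 2, the Dirichlet inverse satisfies |f⁻¹(n)| ≤ (A/(A+1))^{ω(n)} · (A+1)^{Ω(n)} · n^{3 ln c / ln 3}. -/
/-!
The Dirichlet inverse `g` of a multiplicative `f` is multiplicative: the multiplicative function
agreeing with `g` on prime powers is again a right inverse of `f`, hence equal to `g`. So it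
suffices to bound `g (p ^ k)`, which satisfies `g (p ^ k) = -∑_{i<k} f (p ^ (k - i)) g (p ^ i)`.
From `m ^ 3 ≤ 3 ^ m` one gets `c ^ m ≤ m ^ (3 log c / log 3)`, so `|f (p ^ j)| ≤ A t ^ j` with
`t = p ^ (3 log c / log 3)`, and the recurrence gives `|g (p ^ k)| ≤ A (A + 1) ^ (k - 1) t ^ k`.
Multiplying over the prime powers dividing `n` yields the bound.
-/

open Finset ArithmeticFunction

namespace ArithmeticFunction

variable {R : Type*}

def ofFun [Zero R] (f : ℕ → R) : ArithmeticFunction R :=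
  ⟨fun n => if n = 0 then 0 else f n, if_pos rfl⟩

theorem ofFun_apply [Zero R] (f : ℕ → R) {n : ℕ} (hn : n ≠ 0) : ofFun f n = f n :=
  if_neg hn

theorem isMultiplicative_ofFun_factorization_prod [CommMonoidWithZero R] (g : ℕ → R) :
    (ofFun fun n => n.factorization.prod fun p k => g (p ^ k)).IsMultiplicative := by
  refine IsMultiplicative.iff_ne_zero.2 ⟨?_, fun {m n} hm hn hmn => ?_⟩
  · simp [ofFun_apply]
  · rw [ofFun_apply _ (mul_ne_zero hm hn), ofFun_apply _ hm, ofFun_apply _ hn,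
      Nat.factorization_mul_of_coprime hmn]
    exact Finsupp.prod_add_index_of_disjoint hmn.disjoint_primeFactors _

theorem IsMultiplicative.of_mul_eq_one [CommRing R] {f g : ArithmeticFunction R}
    (hf : f.IsMultiplicative) (hfg : f * g = 1) : g.IsMultiplicative := by
  have hg1 : g 1 = 1 := by simpa [hf.map_one] using congrArg (· 1) hfg
  set G := ofFun fun n => n.factorization.prod fun p k => g (p ^ k)
  have hG := isMultiplicative_ofFun_factorization_prod (fun n => g n)
  have hGg : ∀ {p : ℕ} (i : ℕ), p.Prime → G (p ^ i) = g (p ^ i) := fun i hp => by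
    rw [ofFun_apply _ (pow_ne_zero i hp.ne_zero), hp.factorization_pow,
      Finsupp.prod_single_index (by simpa using hg1)]
  have hfG : f * G = 1 := by
    refine ((hf.mul hG).eq_iff_eq_on_prime_powers _ _ isMultiplicative_one).2 fun p k hp => ?_
    rw [← hfg, mul_apply, mul_apply]
    refine sum_congr rfl fun d hd => ?_
    obtain ⟨i, -, hi⟩ := (Nat.dvd_prime_pow hp).1
      (Nat.dvd_of_mem_divisors (Nat.snd_mem_divisors_of_mem_antidiagonal hd))
    rw [hi, hGg i hp]
  have : G = g := calc
    G = g * f * G := by rw [mul_comm g, hfg, one_mul]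
    _ = g := by rw [mul_assoc, hfG, mul_one]
  exact this ▸ hG

theorem isMultiplicative_ofFun [MonoidWithZero R] {f : ℕ → R} (hf1 : f 1 = 1)
    (hmult : ∀ m n : ℕ, 0 < m → 0 < n → Nat.Coprime m n → f (m * n) = f m * f n) :
    (ofFun f).IsMultiplicative := by
  refine IsMultiplicative.iff_ne_zero.2 ⟨by rw [ofFun_apply f one_ne_zero, hf1], ?_⟩
  intro m n hm hn hmn
  rw [ofFun_apply f (mul_ne_zero hm hn), ofFun_apply f hm, ofFun_apply f hn]
  exact hmult m n (Nat.pos_of_ne_zero hm) (Nat.pos_of_ne_zero hn) hmn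

theorem ofFun_mul_ofFun_eq_one [Semiring R] {f g : ℕ → R}
    (hginv : ∀ n : ℕ, 0 < n → ∑ d ∈ n.divisors, f (n / d) * g d = if n = 1 then 1 else 0) :
    ofFun f * ofFun g = 1 := by
  ext n
  rcases eq_or_ne n 0 with rfl | hn
  · simp
  rw [mul_apply, Nat.sum_divisorsAntidiagonal' fun a b => ofFun f a * ofFun g b, one_apply,
    ← hginv n (Nat.pos_of_ne_zero hn)]
  refine sum_congr rfl fun d hd => ?_
  have hd0 : d ≠ 0 := Nat.ne_of_gt (Nat.pos_of_mem_divisors hd)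
  have hnd0 : n / d ≠ 0 := (Nat.div_ne_zero_iff_of_dvd (Nat.dvd_of_mem_divisors hd)).2 ⟨hn, hd0⟩
  rw [ofFun_apply f hnd0, ofFun_apply g hd0]

end ArithmeticFunction

theorem apply_prime_pow_succ_eq_neg_sum {R : Type*} [Ring R] {f g : ℕ → R} (hf1 : f 1 = 1)
    (hginv : ∀ n : ℕ, 0 < n → ∑ d ∈ n.divisors, f (n / d) * g d = if n = 1 then 1 else 0)
    {p : ℕ} (hp : p.Prime) (k : ℕ) :
    g (p ^ (k + 1)) = -∑ i ∈ range (k + 1), f (p ^ (k + 1 - i)) * g (p ^ i) := by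
  have h := hginv (p ^ (k + 1)) (pow_pos hp.pos _)
  rw [if_neg (Nat.one_lt_pow k.succ_ne_zero hp.one_lt).ne', Nat.sum_divisors_prime_pow hp,
    sum_range_succ, Nat.div_self (pow_pos hp.pos _), hf1, one_mul] at h
  rw [eq_neg_iff_add_eq_zero, add_comm, ← h]
  refine congrArg (· + _) (sum_congr rfl fun i hi => ?_)
  rw [Nat.pow_div ((mem_range.1 hi).le) hp.pos]

theorem abs_le_of_eq_neg_sum_mul {a b : ℕ → ℝ} {A t : ℝ} (hA : 0 ≤ A) (ht : 0 ≤ t)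
    (ha0 : a 0 = 1) (ha : ∀ k, a (k + 1) = -∑ i ∈ range (k + 1), b (k + 1 - i) * a i)
    (hb : ∀ j, 1 ≤ j → |b j| ≤ A * t ^ j) (k : ℕ) :
    |a (k + 1)| ≤ A * (A + 1) ^ k * t ^ (k + 1) := by
  set S : ℕ → ℝ := fun k => ∑ i ∈ range (k + 1), |a i| * t ^ (k - i)
  have step : ∀ k, |a (k + 1)| ≤ A * t * S k := fun k => calc
    |a (k + 1)| ≤ ∑ i ∈ range (k + 1), |b (k + 1 - i)| * |a i| := by
      rw [ha, abs_neg]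
      simpa only [abs_mul] using abs_sum_le_sum_abs (fun i => b (k + 1 - i) * a i) _
    _ ≤ ∑ i ∈ range (k + 1), A * t * (|a i| * t ^ (k - i)) := by
      refine sum_le_sum fun i hi => ?_
      have hik : k + 1 - i = k - i + 1 := by have := mem_range.1 hi; omega
      calc |b (k + 1 - i)| * |a i| ≤ A * t ^ (k + 1 - i) * |a i| :=
            mul_le_mul_of_nonneg_right (hb _ (by omega)) (abs_nonneg _)
        _ = A * t * (|a i| * t ^ (k - i)) := by rw [hik, pow_succ]; ring
    _ = A * t * S k := (mul_sum _ _ _).symm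
  -- `S k / t ^ k` grows at most by the factor `A + 1` at each step
  have hS : ∀ k, S k ≤ (A + 1) ^ k * t ^ k := by
    intro k
    induction k with
    | zero => simp [S, ha0]
    | succ k ih =>
      have hshift : S (k + 1) = t * S k + |a (k + 1)| := by
        simp only [S, sum_range_succ _ (k + 1), Nat.sub_self, pow_zero, mul_one, mul_sum]
        congr 1
        refine sum_congr rfl fun i hi => ?_
        rw [Nat.sub_add_comm (mem_range_succ_iff.1 hi), pow_succ]
        ring
      calc S (k + 1) ≤ t * S k + A * t * S k := by rw [hshift]; linarith [step k]
        _ = (A + 1) * t * S k := by ring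
        _ ≤ (A + 1) * t * ((A + 1) ^ k * t ^ k) := by gcongr
        _ = (A + 1) ^ (k + 1) * t ^ (k + 1) := by ring
  calc |a (k + 1)| ≤ A * t * S k := step k
    _ ≤ A * t * ((A + 1) ^ k * t ^ k) := by gcongr; exact hS k
    _ = A * (A + 1) ^ k * t ^ (k + 1) := by ring

theorem Nat.pow_three_le_three_pow : ∀ m : ℕ, m ^ 3 ≤ 3 ^ m
  | 0 | 1 | 2 | 3 => by norm_num
  | m + 4 => by
    calc (m + 4) ^ 3 ≤ 3 * (m + 3) ^ 3 := by ring_nf; omega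
      _ ≤ 3 * 3 ^ (m + 3) := Nat.mul_le_mul_left 3 (Nat.pow_three_le_three_pow (m + 3))
      _ = 3 ^ (m + 4) := by ring

theorem Real.pow_le_natCast_rpow_of_lt_one {c : ℝ} (hc0 : 0 < c) (hc1 : c < 1) {m : ℕ}
    (hm : 0 < m) :
    c ^ m ≤ (m : ℝ) ^ (3 * Real.log c / Real.log 3) := by
  have hlogb : Real.logb 3 c ≤ 0 := (Real.logb_neg (by norm_num) hc0 hc1).le
  calc c ^ m = ((3 : ℝ) ^ m) ^ Real.logb 3 c := by
        rw [← Real.rpow_pow_comm (by norm_num), Real.rpow_logb (by norm_num) (by norm_num) hc0]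
    _ ≤ ((m : ℝ) ^ 3) ^ Real.logb 3 c :=
        Real.rpow_le_rpow_of_nonpos (by positivity)
          (by exact_mod_cast Nat.pow_three_le_three_pow m) hlogb
    _ = (m : ℝ) ^ (3 * Real.log c / Real.log 3) := by
        rw [mul_div_assoc, Real.log_div_log, ← Real.rpow_natCast_mul (by positivity)]
        norm_num

theorem abs_apply_prime_pow_succ_le {f g : ℕ → ℝ} (hf1 : f 1 = 1)
    (hginv : ∀ n : ℕ, 0 < n → ∑ d ∈ n.divisors, f (n / d) * g d = if n = 1 then 1 else 0)
    {A c : ℝ} (hA : 0 ≤ A) (hc0 : 0 < c) (hc1 : c < 1) (hf : ∀ n : ℕ, 2 ≤ n → |f n| ≤ A * c ^ n)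
    {p : ℕ} (hp : p.Prime) (k : ℕ) :
    |g (p ^ (k + 1))| ≤
      A * (A + 1) ^ k * ((p : ℝ) ^ (3 * Real.log c / Real.log 3)) ^ (k + 1) := by
  have hg1 : g 1 = 1 := by simpa [hf1] using hginv 1 one_pos
  have hfp : ∀ j, 1 ≤ j → |f (p ^ j)| ≤ A * ((p : ℝ) ^ (3 * Real.log c / Real.log 3)) ^ j :=
    fun j hj => calc
      |f (p ^ j)| ≤ A * c ^ p ^ j := hf _ (hp.two_le.trans (Nat.le_self_pow (by omega) p))
      _ ≤ A * ((p : ℝ) ^ (3 * Real.log c / Real.log 3)) ^ j := by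
        rw [Real.rpow_pow_comm (Nat.cast_nonneg p), ← Nat.cast_pow]
        gcongr
        exact Real.pow_le_natCast_rpow_of_lt_one hc0 hc1 (pow_pos hp.pos j)
  exact abs_le_of_eq_neg_sum_mul (a := fun i => g (p ^ i)) hA (by positivity)
    (by rwa [pow_zero]) (apply_prime_pow_succ_eq_neg_sum hf1 hginv hp) hfp k

theorem Nat.factorization_prod_mul_mul_rpow_pow {n : ℕ} (hn : n ≠ 0) (a b x : ℝ) :
    (n.factorization.prod fun p k => a * (b * (p : ℝ) ^ x) ^ k) =
      a ^ n.primeFactors.card * b ^ n.primeFactorsList.length * (n : ℝ) ^ x := by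
  have hrpow : (n.factorization.prod fun p k => ((p : ℝ) ^ x) ^ k) = (n : ℝ) ^ x := by
    conv_rhs => rw [← Nat.prod_factorization_pow_eq_self hn]
    rw [Nat.cast_finsuppProd, Finsupp.prod, Finsupp.prod,
      ← Real.finsetProd_rpow _ _ fun p _ => by positivity]
    refine prod_congr rfl fun p _ => ?_
    rw [Real.rpow_pow_comm (Nat.cast_nonneg p), Nat.cast_pow]
  rw [← hrpow, ← cardFactors_apply,
    cardFactors_eq_sum_factorization, ← Nat.support_factorization]
  simp only [Finsupp.prod, Finsupp.sum, mul_pow, prod_mul_distrib, prod_const,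
    prod_pow_eq_pow_sum]
  ring

theorem stmt10 (f g : ℕ → ℝ) (hf1 : f 1 = 1)
    (hmult : ∀ m n : ℕ, 0 < m → 0 < n → Nat.Coprime m n → f (m * n) = f m * f n)
    (hginv : ∀ n : ℕ, 0 < n →
      ∑ d ∈ n.divisors, f (n / d) * g d = if n = 1 then 1 else 0)
    (A c : ℝ) (hA : 0 < A) (hc0 : 0 < c) (hc1 : c < 1)
    (hf : ∀ n : ℕ, 2 ≤ n → |f n| ≤ A * c ^ n) :
    ∀ n : ℕ, 2 ≤ n →
      |g n| ≤ (A / (A + 1)) ^ n.primeFactors.card *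
        (A + 1) ^ n.primeFactorsList.length *
        (n : ℝ) ^ (3 * Real.log c / Real.log 3) := by
  intro n hn
  have hg : (ofFun g).IsMultiplicative :=
    (isMultiplicative_ofFun hf1 hmult).of_mul_eq_one (ofFun_mul_ofFun_eq_one hginv)
  have hprime_pow : ∀ p ∈ n.primeFactors, |g (p ^ n.factorization p)| ≤
      A / (A + 1) * ((A + 1) * (p : ℝ) ^ (3 * Real.log c / Real.log 3)) ^ n.factorization p := by
    intro p hp
    obtain ⟨k, hk⟩ := Nat.exists_eq_add_one_of_ne_zero
      (Finsupp.mem_support_iff.1 (by rwa [Nat.support_factorization]))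
    rw [hk]
    refine (abs_apply_prime_pow_succ_le hf1 hginv hA.le hc0 hc1 hf
      (Nat.prime_of_mem_primeFactors hp) k).trans_eq ?_
    rw [mul_pow, pow_succ (A + 1)]
    field_simp
  calc |g n| = ∏ p ∈ n.primeFactors, |g (p ^ n.factorization p)| := by
        rw [← ofFun_apply g (by omega : n ≠ 0), hg.multiplicative_factorization _ (by omega),
          Finsupp.prod, Nat.support_factorization, abs_prod]
        exact prod_congr rfl fun p hp => by
          rw [ofFun_apply g (pow_ne_zero _ (Nat.prime_of_mem_primeFactors hp).ne_zero)]
    _ ≤ ∏ p ∈ n.primeFactors,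
          A / (A + 1) * ((A + 1) * (p : ℝ) ^ (3 * Real.log c / Real.log 3)) ^ n.factorization p :=
        prod_le_prod (fun _ _ => abs_nonneg _) hprime_pow
    _ = _ := Nat.factorization_prod_mul_mul_rpow_pow (by omega) _ _ _
end

section
/- Let f : ℕ → ℝ be an arithmetic function with f(1) = 1. Assume there exist an integer N ≥ 2, C > 0, and γ ∈ ℝ such that f(n) = 0 for all 2 ≤ n ≤ N and |f(n)| ≤ C n^γ for all n > N. Let ς > 1 be the real number satisfying ζ(ς) = 1/C + ∑_{m=1}^{N} m^{-ς}, where ζ is the Riemann zeta function. Then for all n > N, the Dirichlet inverse satisfies |f⁻¹(n)| ≤ n^{γ+ς}. -/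
/-!
For the Dirichlet inverse `g`, `g 1 = 1` and `g` vanishes on `[2, N]` along with `f`, so
`|g d| ≤ d ^ (γ + ς)` holds trivially for `d ≤ N` and serves as the hypothesis of a strong
induction. In the recursion `g n = -∑_{d ∣ n, d < n} f (n / d) g d` the factor `f (n / d)`
vanishes unless `n / d > N`, and `(n / d) ^ γ d ^ (γ + ς) = n ^ (γ + ς) (n / d) ^ (-ς)`, so
`|g n| ≤ C n ^ (γ + ς) ∑_{e ∣ n, e > N} e ^ (-ς)`. That sum is at most the tail
`∑_{m > N} m ^ (-ς)`, which the choice of `ς` makes equal to `1 / C`.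
-/

open Finset

def IsDirichletInverse (f g : ℕ → ℝ) : Prop :=
  ∀ n : ℕ, 0 < n → ∑ d ∈ n.divisors, f (n / d) * g d = if n = 1 then 1 else 0

theorem Finset.sum_le_tsum_sub_sum {ι : Type*} {h : ι → ℝ} (hh : Summable h) (h0 : ∀ i, 0 ≤ h i)
    {s t : Finset ι} (hst : Disjoint s t) : ∑ i ∈ s, h i ≤ ∑' i, h i - ∑ i ∈ t, h i := by
  rw [le_sub_iff_add_le, ← sum_disjUnion hst]
  exact hh.sum_le_tsum _ fun i _ ↦ h0 i

theorem Real.rpow_mul_rpow_add_eq {x y : ℝ} (hx : 0 < x) (hy : 0 < y) (γ ς : ℝ) :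
    x ^ γ * y ^ (γ + ς) = (x * y) ^ (γ + ς) * x ^ (-ς) := by
  rw [Real.mul_rpow hx.le hy.le, Real.rpow_add hx, Real.rpow_neg hx.le]
  field_simp

theorem Nat.sum_properDivisors_filter_lt_div_le {h : ℕ → ℝ} (hh : Summable h) (h0 : ∀ m, 0 ≤ h m)
    (n N : ℕ) :
    ∑ d ∈ n.properDivisors with N < n / d, h (n / d) ≤ ∑' m, h m - ∑ m ∈ Icc 1 N, h m := by
  let φ : ℕ → ℝ := fun e ↦ if N < e then h e else 0
  calc ∑ d ∈ n.properDivisors with N < n / d, h (n / d)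
      = ∑ d ∈ n.properDivisors, φ (n / d) := sum_filter _ _
    _ ≤ ∑ d ∈ n.divisors, φ (n / d) :=
        sum_le_sum_of_subset_of_nonneg Nat.properDivisors_subset_divisors
          fun _ _ _ ↦ ite_nonneg (h0 _) le_rfl
    _ = ∑ e ∈ n.divisors with N < e, h e := by rw [Nat.sum_div_divisors, sum_filter]
    _ ≤ ∑' m, h m - ∑ m ∈ Icc 1 N, h m := by
        refine sum_le_tsum_sub_sum hh h0 (disjoint_left.2 fun e he he' ↦ ?_)
        have := (mem_filter.1 he).2
        have := (mem_Icc.1 he').2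
        omega

theorem abs_mul_le_of_mem_properDivisors {f : ℕ → ℝ} {N n d : ℕ} {C γ ς x : ℝ}
    (hfzero : ∀ n : ℕ, 2 ≤ n → n ≤ N → f n = 0) (hf : ∀ n : ℕ, N < n → |f n| ≤ C * (n : ℝ) ^ γ)
    (hd : d ∈ n.properDivisors) (hx : |x| ≤ (d : ℝ) ^ (γ + ς)) :
    |f (n / d) * x| ≤ if N < n / d then C * (n : ℝ) ^ (γ + ς) * ((n / d : ℕ) : ℝ) ^ (-ς) else 0 := by
  have hquot := Nat.one_lt_div_of_mem_properDivisors hd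
  split_ifs with hNq
  · have hd0 : (0 : ℝ) < d := by exact_mod_cast Nat.pos_of_mem_properDivisors hd
    have hq0 : (0 : ℝ) < (n / d : ℕ) := by exact_mod_cast (by omega : 0 < n / d)
    have hqd : ((n / d : ℕ) : ℝ) * d = n := by
      exact_mod_cast Nat.div_mul_cancel (Nat.mem_properDivisors.1 hd).1
    calc |f (n / d) * x| = |f (n / d)| * |x| := abs_mul _ _
      _ ≤ C * ((n / d : ℕ) : ℝ) ^ γ * (d : ℝ) ^ (γ + ς) :=
          mul_le_mul (hf _ hNq) hx (abs_nonneg _) ((abs_nonneg _).trans (hf _ hNq))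
      _ = C * (n : ℝ) ^ (γ + ς) * ((n / d : ℕ) : ℝ) ^ (-ς) := by
          rw [mul_assoc, Real.rpow_mul_rpow_add_eq hq0 hd0, hqd, mul_assoc]
  · rw [hfzero _ hquot (not_lt.1 hNq), zero_mul, abs_zero]

namespace IsDirichletInverse

variable {f g : ℕ → ℝ}

theorem apply_one (hf1 : f 1 = 1) (hg : IsDirichletInverse f g) : g 1 = 1 := by
  simpa [hf1] using hg 1 one_pos

theorem eq_neg_sum_properDivisors (hf1 : f 1 = 1) (hg : IsDirichletInverse f g) {n : ℕ}
    (hn : 2 ≤ n) : g n = -∑ d ∈ n.properDivisors, f (n / d) * g d := by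
  have h := hg n (by omega)
  rw [if_neg (by omega), ← Nat.cons_self_properDivisors (by omega), sum_cons,
    Nat.div_self (by omega), hf1, one_mul] at h
  linarith

theorem apply_eq_zero (hf1 : f 1 = 1) (hg : IsDirichletInverse f g) {N : ℕ}
    (hfzero : ∀ n : ℕ, 2 ≤ n → n ≤ N → f n = 0) : ∀ n : ℕ, 2 ≤ n → n ≤ N → g n = 0 := by
  intro n
  induction n using Nat.strong_induction_on with
  | _ n ih =>
    intro hn hnN
    rw [hg.eq_neg_sum_properDivisors hf1 hn, sum_eq_zero, neg_zero]
    intro d hd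
    have hlt := (Nat.mem_properDivisors.1 hd).2
    obtain rfl | hd2 : d = 1 ∨ 2 ≤ d := by
      have := Nat.pos_of_mem_properDivisors hd
      omega
    · rw [Nat.div_one, hfzero n hn hnN, zero_mul]
    · rw [ih d hlt hd2 (by omega), mul_zero]

theorem abs_apply_le_mul_sum (hf1 : f 1 = 1) (hg : IsDirichletInverse f g) {N : ℕ} {C γ ς : ℝ}
    (hfzero : ∀ n : ℕ, 2 ≤ n → n ≤ N → f n = 0) (hf : ∀ n : ℕ, N < n → |f n| ≤ C * (n : ℝ) ^ γ)
    {n : ℕ} (hn : 2 ≤ n) (ih : ∀ d < n, 0 < d → |g d| ≤ (d : ℝ) ^ (γ + ς)) :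
    |g n| ≤ C * (n : ℝ) ^ (γ + ς) *
      ∑ d ∈ n.properDivisors with N < n / d, ((n / d : ℕ) : ℝ) ^ (-ς) := by
  rw [hg.eq_neg_sum_properDivisors hf1 hn, abs_neg, mul_sum, sum_filter]
  refine (abs_sum_le_sum_abs _ _).trans (sum_le_sum fun d hd ↦ ?_)
  exact abs_mul_le_of_mem_properDivisors hfzero hf hd
    (ih d (Nat.mem_properDivisors.1 hd).2 (Nat.pos_of_mem_properDivisors hd))

end IsDirichletInverse

theorem stmt17_general (f g : ℕ → ℝ) (hf1 : f 1 = 1)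
    (hginv : ∀ n : ℕ, 0 < n →
      ∑ d ∈ n.divisors, f (n / d) * g d = if n = 1 then 1 else 0)
    (N : ℕ) (C : ℝ) (hC : 0 < C) (γ : ℝ)
    (hfzero : ∀ n : ℕ, 2 ≤ n → n ≤ N → f n = 0)
    (hf : ∀ n : ℕ, N < n → |f n| ≤ C * (n : ℝ) ^ γ)
    (ς : ℝ) (hς : 1 < ς)
    (hzeta : ∑' m : ℕ, (m : ℝ) ^ (-ς) =
      1 / C + ∑ m ∈ Finset.Icc 1 N, (m : ℝ) ^ (-ς)) :
    ∀ n : ℕ, N < n → |g n| ≤ (n : ℝ) ^ (γ + ς) := by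
  have hg : IsDirichletInverse f g := hginv
  have hsumm : Summable fun m : ℕ ↦ (m : ℝ) ^ (-ς) := Real.summable_nat_rpow.2 (by linarith)
  have htail : ∑' m : ℕ, (m : ℝ) ^ (-ς) - ∑ m ∈ Finset.Icc 1 N, (m : ℝ) ^ (-ς) = 1 / C := by
    rw [hzeta]; ring
  suffices h : ∀ n : ℕ, 0 < n → |g n| ≤ (n : ℝ) ^ (γ + ς) from fun n hn ↦ h n (by omega)
  intro n
  induction n using Nat.strong_induction_on with
  | _ n ih =>
    intro hn
    obtain rfl | hn2 : n = 1 ∨ 2 ≤ n := by omega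
    · simp [hg.apply_one hf1]
    by_cases hnN : n ≤ N
    · rw [hg.apply_eq_zero hf1 hfzero n hn2 hnN, abs_zero]
      positivity
    calc |g n| ≤ C * (n : ℝ) ^ (γ + ς) *
          ∑ d ∈ n.properDivisors with N < n / d, ((n / d : ℕ) : ℝ) ^ (-ς) :=
          hg.abs_apply_le_mul_sum hf1 hfzero hf hn2 ih
      _ ≤ C * (n : ℝ) ^ (γ + ς) * (1 / C) := by
          rw [← htail]
          gcongr
          exact Nat.sum_properDivisors_filter_lt_div_le hsumm (fun m ↦ by positivity) n N
      _ = (n : ℝ) ^ (γ + ς) := by field_simp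

theorem stmt17 (f g : ℕ → ℝ) (hf1 : f 1 = 1)
    (hginv : ∀ n : ℕ, 0 < n →
      ∑ d ∈ n.divisors, f (n / d) * g d = if n = 1 then 1 else 0)
    (N : ℕ) (hN : 2 ≤ N) (C : ℝ) (hC : 0 < C) (γ : ℝ)
    (hfzero : ∀ n : ℕ, 2 ≤ n → n ≤ N → f n = 0)
    (hf : ∀ n : ℕ, N < n → |f n| ≤ C * (n : ℝ) ^ γ)
    (ς : ℝ) (hς : 1 < ς)
    (hzeta : ∑' m : ℕ, (m : ℝ) ^ (-ς) =
      1 / C + ∑ m ∈ Finset.Icc 1 N, (m : ℝ) ^ (-ς)) :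
    ∀ n : ℕ, N < n → |g n| ≤ (n : ℝ) ^ (γ + ς) :=
  stmt17_general f g hf1 hginv N C hC γ hfzero hf ς hς hzeta
end
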